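/- arXiv:1904.12002 — 6 statements merged into one kernel-verified Lean document; each statement's English description precedes it below -/
import Mathlib

section
/- In the perturbed-scheme setup (see context), suppose the set of trigger indices {k ∈ ℕ : c(z^k) = true} is finite and equals {l_1 < l_2 < ... < l_P} with l_1 ≥ 1, with no two consecutive triggers (l_{j+1} ≥ l_j + 2 for all j) and with l_P + P ≤ K. Then for every k ∈ ℕ there exists N with 0 ≤ N ≤ P such that z^k = y^{k+N}; more precisely, z^k = y^k for all k ≤ l_1 and z^k = y^{k+j} for all j = 1, ..., P and all k with l_j < k ≤ l_{j+1} (where l_{P+1} = ∞). In particular every element of {z^k} appears in {y^k}. -/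
/-!
Away from triggers both schemes just apply `T`, so if `z k = y (k + N)` then
`z (k + 1) = y (k + 1 + N)`. At a trigger `k` with `z k = y i`, the term `-λ p` of the outer
correction cancels the drift of `T`, so `y (i + 1) = z k + B (z k)`, and the next outer step
is unperturbed because `y i` itself triggered; hence `z (k + 1) = T (z k + B (z k)) = y (i + 2)`
and the shift grows by one. The outer scheme does see the trigger because `y (i - 1) = z (k - 1)`
did not trigger (no two consecutive triggers, `k ≥ 1`), and `l j + P ≤ K` keeps the
perturbations switched on there.
-/

open Finset Function

section TriggerCount

variable {P : ℕ} (l : Fin P → ℕ)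

def triggerCount (k : ℕ) : ℕ := #{j | l j < k}

lemma triggerCount_zero : triggerCount l 0 = 0 := by
  simp [triggerCount]

lemma triggerCount_le (k : ℕ) : triggerCount l k ≤ P :=
  (card_filter_le _ _).trans_eq (card_fin P)

lemma triggerCount_succ_of_forall_ne {k : ℕ} (h : ∀ j, l j ≠ k) :
    triggerCount l (k + 1) = triggerCount l k := by
  unfold triggerCount
  congr 1
  refine filter_congr fun j _ => ?_
  have := h j
  omega

lemma triggerCount_succ_of_eq {l : Fin P → ℕ} (hl : Injective l) {j : Fin P} {k : ℕ}
    (hj : l j = k) : triggerCount l (k + 1) = triggerCount l k + 1 := by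
  have hsplit : (univ.filter fun i => l i < k + 1) = insert j (univ.filter fun i => l i < k) := by
    ext i
    simp only [mem_filter, mem_univ, true_and, mem_insert]
    constructor
    · intro hi
      rcases Nat.lt_succ_iff_lt_or_eq.mp hi with hi | hi
      · exact Or.inr hi
      · exact Or.inl (hl (hi.trans hj.symm))
    · rintro (rfl | hi) <;> omega
  rw [triggerCount, hsplit, card_insert_of_notMem (by simp [hj]), triggerCount]

lemma add_one_ne_of_gap {l : Fin P → ℕ} (hmono : StrictMono l)
    (hgap : ∀ i j : Fin P, (i : ℕ) + 1 = (j : ℕ) → l i + 2 ≤ l j) (i j : Fin P) :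
    l i + 1 ≠ l j := by
  intro h
  have hij : i < j := hmono.lt_iff_lt.mp (by omega)
  have hnext := hgap i ⟨i + 1, by omega⟩ rfl
  have := hmono.monotone (show (⟨i + 1, by omega⟩ : Fin P) ≤ j from Fin.le_def.mpr hij)
  omega

end TriggerCount

section PerturbedSchemes

variable {X : Type*} [AddCommGroup X] [Module ℝ X]
  {lam : X → ℝ} {p T : X → X} {c : X → Bool} {B : X → X} {K : ℕ} {y z : ℕ → X}

def IsInnerPerturbed (T : X → X) (c : X → Bool) (B : X → X) (K : ℕ) (z : ℕ → X) : Prop :=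
  ∀ k, z (k + 1) = T (z k + (if k ≤ K then (1 : ℝ) else 0) •
    (if c (z k) = true then B (z k) else 0))

def IsOuterPerturbed (lam : X → ℝ) (p T : X → X) (c : X → Bool) (B : X → X) (K : ℕ)
    (y : ℕ → X) : Prop :=
  ∀ k, y (k + 1) = T (y k) + (if k ≤ K then (1 : ℝ) else 0) •
    (if 1 ≤ k ∧ c (y (k - 1)) = false ∧ c (y k) = true then
      B (y k) - lam (y k) • p (y k) else 0)

lemma IsInnerPerturbed.succ_of_not_trigger (hz : IsInnerPerturbed T c B K z) {k : ℕ}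
    (hc : c (z k) = false) : z (k + 1) = T (z k) := by
  simp [hz k, hc]

lemma IsInnerPerturbed.succ_of_trigger (hz : IsInnerPerturbed T c B K z) {k : ℕ}
    (hk : k ≤ K) (hc : c (z k) = true) : z (k + 1) = T (z k + B (z k)) := by
  simp [hz k, hk, hc]

lemma IsOuterPerturbed.succ_of_not_trigger (hy : IsOuterPerturbed lam p T c B K y) {k : ℕ}
    (hc : c (y k) = false) : y (k + 1) = T (y k) := by
  simp [hy k, hc]

lemma IsOuterPerturbed.add_two_of_trigger (hy : IsOuterPerturbed lam p T c B K y) {k : ℕ}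
    (hc : c (y k) = true) : y (k + 2) = T (y (k + 1)) := by
  simp [hy (k + 1), hc]

lemma IsOuterPerturbed.add_two_of_new_trigger (hy : IsOuterPerturbed lam p T c B K y)
    (hT : ∀ x, T x = x + lam x • p x) {k : ℕ} (hk : k + 1 ≤ K) (hprev : c (y k) = false)
    (hc : c (y (k + 1)) = true) : y (k + 2) = y (k + 1) + B (y (k + 1)) := by
  rw [hy (k + 1), if_pos hk, if_pos ⟨le_add_self, by simpa using hprev, hc⟩, hT, one_smul]
  abel

lemma inner_succ_eq_outer_succ (hz : IsInnerPerturbed T c B K z)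
    (hy : IsOuterPerturbed lam p T c B K y) {k i : ℕ} (h : z k = y i) (hc : c (z k) = false) :
    z (k + 1) = y (i + 1) := by
  rw [hz.succ_of_not_trigger hc, hy.succ_of_not_trigger (h ▸ hc), h]

lemma inner_succ_eq_outer_add_three (hz : IsInnerPerturbed T c B K z)
    (hy : IsOuterPerturbed lam p T c B K y) (hT : ∀ x, T x = x + lam x • p x) {k i : ℕ}
    (hk : k ≤ K) (hi : i + 1 ≤ K) (hprev : c (y i) = false) (h : z k = y (i + 1))
    (hc : c (z k) = true) : z (k + 1) = y (i + 3) := by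
  have hc' : c (y (i + 1)) = true := h ▸ hc
  rw [show i + 3 = i + 1 + 2 from rfl, hy.add_two_of_trigger hc',
    hy.add_two_of_new_trigger hT hi hprev hc', hz.succ_of_trigger hk hc, h]

theorem inner_eq_outer_add_triggerCount (hT : ∀ x, T x = x + lam x • p x)
    (hz : IsInnerPerturbed T c B K z) (hy : IsOuterPerturbed lam p T c B K y) (h0 : z 0 = y 0)
    {P : ℕ} {l : Fin P → ℕ} (hmono : StrictMono l) (htrig : ∀ k, c (z k) = true ↔ ∃ j, l j = k)
    (hfirst : ∀ j, 1 ≤ l j) (hgap : ∀ i j : Fin P, (i : ℕ) + 1 = (j : ℕ) → l i + 2 ≤ l j)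
    (hK : ∀ j, l j + P ≤ K) (k : ℕ) : z k = y (k + triggerCount l k) := by
  have hquiet : ∀ k, c (z k) = false → ∀ j, l j ≠ k := fun k hc j hj => by
    simp [(htrig k).2 ⟨j, hj⟩] at hc
  induction k using Nat.strong_induction_on with
  | _ k ih =>
  rcases k with _ | k
  · rwa [triggerCount_zero]
  cases hc : c (z k)
  · rw [triggerCount_succ_of_forall_ne l (hquiet k hc), add_right_comm]
    exact inner_succ_eq_outer_succ hz hy (ih k k.lt_succ_self) hc
  · obtain ⟨j, rfl⟩ := (htrig _).1 hc
    obtain ⟨m, hm⟩ : ∃ m, l j = m + 1 := ⟨l j - 1, by have := hfirst j; omega⟩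
    have hprev : c (z m) = false := by
      rw [← Bool.not_eq_true, htrig]
      rintro ⟨i, hi⟩
      exact add_one_ne_of_gap hmono hgap i j (by omega)
    have hNm := triggerCount_succ_of_forall_ne l (hquiet m hprev)
    have hNj := triggerCount_succ_of_eq hmono.injective hm
    have hzm : z m = y (m + triggerCount l m) := ih m (by omega)
    have hzj : z (m + 1) = y (m + triggerCount l m + 1) := by
      rw [← hNm, ← add_right_comm, ← hm]
      exact ih (l j) (by omega)
    have hbound := triggerCount_le l m
    have hjK := hK j
    rw [hm] at hc ⊢
    rw [hNj, hNm, show m + 1 + 1 + (triggerCount l m + 1) = m + triggerCount l m + 3 by omega]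
    exact inner_succ_eq_outer_add_three hz hy hT (by omega) (by omega) (hzm ▸ hprev) hzj hc

end PerturbedSchemes

/-- In the perturbed-scheme setup, if the trigger indices
`{k : c (z k) = true}` are exactly `l 0 < l 1 < ... < l (P-1)` with `l 0 ≥ 1`,
no two consecutive triggers, and `l j + P ≤ K`, then for every `k` there is
`N ≤ P` (namely `N = #{j : l j < k}`, so `N = 0` for `k ≤ l 0` and `N = j` for
`l (j-1) < k ≤ l j`) with `z k = y (k + N)`; in particular every element of
`{z k}` appears in `{y k}`. -/
theorem inner_subsequence_of_outer {n : ℕ}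
    (lam : EuclideanSpace ℝ (Fin n) → ℝ)
    (p : EuclideanSpace ℝ (Fin n) → EuclideanSpace ℝ (Fin n))
    (T : EuclideanSpace ℝ (Fin n) → EuclideanSpace ℝ (Fin n))
    (hT : ∀ x, T x = x + lam x • p x)
    (c : EuclideanSpace ℝ (Fin n) → Bool)
    (B : EuclideanSpace ℝ (Fin n) → EuclideanSpace ℝ (Fin n))
    (K : ℕ)
    (x0 : EuclideanSpace ℝ (Fin n))
    (y z : ℕ → EuclideanSpace ℝ (Fin n))
    (hy0 : y 0 = x0) (hz0 : z 0 = x0)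
    (hz : ∀ k, z (k + 1) =
      T (z k + (if k ≤ K then (1 : ℝ) else 0) •
        (if c (z k) = true then B (z k) else 0)))
    (hy : ∀ k, y (k + 1) =
      T (y k) + (if k ≤ K then (1 : ℝ) else 0) •
        (if 1 ≤ k ∧ c (y (k - 1)) = false ∧ c (y k) = true then
          B (y k) - lam (y k) • p (y k) else 0))
    (P : ℕ) (l : Fin P → ℕ)
    (hmono : StrictMono l)
    (htrig : ∀ k, c (z k) = true ↔ ∃ j : Fin P, l j = k)
    (hfirst : ∀ j : Fin P, 1 ≤ l j)
    (hgap : ∀ i j : Fin P, (i : ℕ) + 1 = (j : ℕ) → l i + 2 ≤ l j)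
    (hK : ∀ j : Fin P, l j + P ≤ K) :
    ∀ k : ℕ, ∃ N : ℕ, N ≤ P ∧
      N = (Finset.univ.filter fun j : Fin P => l j < k).card ∧
      z k = y (k + N) := fun k =>
  ⟨triggerCount l k, triggerCount_le l k, rfl,
    inner_eq_outer_add_triggerCount hT hz hy (hz0.trans hy0.symm) hmono htrig hfirst hgap hK k⟩
end

section
/- Let u be a unit vector in ℝ^n and let p ∈ ℝ^n with 0 < ‖p‖ ≤ q satisfy ⟨p/‖p‖, u⟩ = −1 + ε for some ε ∈ [ε_min, ε_max] ⊂ (0, 1). Define d = p − ⟨p, u⟩·u and λ^SC = ‖p‖²/‖d‖². Then ‖λ^SC·d‖ ≤ q/√(2·ε_min − ε_min²). In particular, the surrogate constraint perturbation vectors v^k = λ^SC_k·d^SC are bounded in norm by q/√(2·ε_min − ε_min²). -/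
open scoped RealInnerProductSpace

/-! Since `u` is a unit vector, `d` is the component of `p` orthogonal to `u`, so
`‖d‖² = ‖p‖² - ⟪p, u⟫² = ‖p‖² (2ε - ε²)` by the angle condition, and
`‖λ^SC • d‖ = ‖p‖² / ‖d‖ = ‖p‖ / √(2ε - ε²)`. The bound follows because
`t ↦ 2t - t² = 1 - (1 - t)²` increases on `[0, 1]`. -/

section InnerProductSpace

variable {E : Type*} [NormedAddCommGroup E] [InnerProductSpace ℝ E]

theorem norm_sub_inner_smul_sq {u : E} (hu : ‖u‖ = 1) (p : E) :
    ‖p - ⟪p, u⟫ • u‖ ^ 2 = ‖p‖ ^ 2 - ⟪p, u⟫ ^ 2 := by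
  rw [norm_sub_sq_real, real_inner_smul_right, norm_smul, Real.norm_eq_abs, hu]
  ring_nf
  rw [sq_abs]
  ring

theorem inner_eq_norm_mul_inner_normalize (p u : E) :
    ⟪p, u⟫ = ‖p‖ * ⟪‖p‖⁻¹ • p, u⟫ := by
  rcases eq_or_ne p 0 with rfl | hp
  · simp
  · rw [real_inner_smul_left, mul_inv_cancel_left₀ (norm_ne_zero_iff.mpr hp)]

theorem norm_sub_inner_smul_of_inner_normalize_eq {u : E} (hu : ‖u‖ = 1) {p : E} {ε : ℝ}
    (hangle : ⟪‖p‖⁻¹ • p, u⟫ = -1 + ε) :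
    ‖p - ⟪p, u⟫ • u‖ = ‖p‖ * Real.sqrt (2 * ε - ε ^ 2) := by
  have hsq : ‖p - ⟪p, u⟫ • u‖ ^ 2 = ‖p‖ ^ 2 * (2 * ε - ε ^ 2) := by
    rw [norm_sub_inner_smul_sq hu, inner_eq_norm_mul_inner_normalize p u, hangle]
    ring
  rw [← Real.sqrt_sq (norm_nonneg _), hsq, Real.sqrt_mul (sq_nonneg _),
    Real.sqrt_sq (norm_nonneg _)]

end InnerProductSpace

theorem norm_div_norm_sq_smul {E : Type*} [NormedAddCommGroup E] [NormedSpace ℝ E]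
    (a : ℝ) (d : E) : ‖(a / ‖d‖ ^ 2) • d‖ = |a| / ‖d‖ := by
  rw [norm_smul, Real.norm_eq_abs, abs_div, abs_of_nonneg (sq_nonneg ‖d‖), div_mul_eq_mul_div,
    mul_div_assoc, sq, div_self_mul_self', div_eq_mul_inv]

theorem two_mul_sub_sq_le_two_mul_sub_sq {a b : ℝ} (hab : a ≤ b) (hb : b ≤ 1) :
    2 * a - a ^ 2 ≤ 2 * b - b ^ 2 := by
  nlinarith

theorem surrogate_constraint_perturbation_bounded_general {n : ℕ}
    (u : EuclideanSpace ℝ (Fin n)) (hu : ‖u‖ = 1)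
    (p : EuclideanSpace ℝ (Fin n)) (q : ℝ)
    (hpq : ‖p‖ ≤ q)
    (ε εmin εmax : ℝ)
    (hmin : 0 < εmin) (hε1 : εmin ≤ ε) (hε2 : ε ≤ εmax) (hmax : εmax < 1)
    (hangle : ⟪‖p‖⁻¹ • p, u⟫ = -1 + ε)
    (d : EuclideanSpace ℝ (Fin n)) (hd : d = p - ⟪p, u⟫ • u)
    (lamSC : ℝ) (hlam : lamSC = ‖p‖ ^ 2 / ‖d‖ ^ 2) :
    ‖lamSC • d‖ ≤ q / Real.sqrt (2 * εmin - εmin ^ 2) := by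
  have hnorm : ‖lamSC • d‖ = ‖p‖ / Real.sqrt (2 * ε - ε ^ 2) := by
    rw [hlam, norm_div_norm_sq_smul, hd, norm_sub_inner_smul_of_inner_normalize_eq hu hangle,
      abs_of_nonneg (sq_nonneg _), div_mul_eq_div_div, sq, mul_self_div_self]
  rw [hnorm]
  apply div_le_div₀ ((norm_nonneg p).trans hpq) hpq
  · exact Real.sqrt_pos.mpr (by nlinarith)
  · exact Real.sqrt_le_sqrt (two_mul_sub_sq_le_two_mul_sub_sq hε1 (by linarith))

/-- For a unit vector `u` and `p` with `0 < ‖p‖ ≤ q` and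
`⟪p/‖p‖, u⟫ = -1 + ε`, `ε ∈ [εmin, εmax] ⊂ (0,1)`, the surrogate constraint
perturbation `λ^SC • d` with `d = p - ⟪p, u⟫ • u` and `λ^SC = ‖p‖²/‖d‖²`
satisfies `‖λ^SC • d‖ ≤ q / √(2 εmin - εmin²)`. -/
theorem surrogate_constraint_perturbation_bounded {n : ℕ}
    (u : EuclideanSpace ℝ (Fin n)) (hu : ‖u‖ = 1)
    (p : EuclideanSpace ℝ (Fin n)) (q : ℝ)
    (hp0 : 0 < ‖p‖) (hpq : ‖p‖ ≤ q)
    (ε εmin εmax : ℝ)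
    (hmin : 0 < εmin) (hε1 : εmin ≤ ε) (hε2 : ε ≤ εmax) (hmax : εmax < 1)
    (hangle : ⟪‖p‖⁻¹ • p, u⟫ = -1 + ε)
    (d : EuclideanSpace ℝ (Fin n)) (hd : d = p - ⟪p, u⟫ • u)
    (lamSC : ℝ) (hlam : lamSC = ‖p‖ ^ 2 / ‖d‖ ^ 2) :
    ‖lamSC • d‖ ≤ q / Real.sqrt (2 * εmin - εmin ^ 2) :=
  surrogate_constraint_perturbation_bounded_general u hu p q hpq ε εmin εmax hmin hε1 hε2 hmax
    hangle d hd lamSC hlam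
end

section
/- Let I be a finite nonempty index set, let w : I → ℝ with w_i > 0 for all i and Σ_i w_i = 1, and let x, z ∈ ℝ^n. For each i ∈ I let y_i ∈ ℝ^n satisfy the cutter inequality ⟨y_i − x, z − x⟩ ≥ ‖y_i − x‖². Let λ ∈ (0, 2] and define x⁺ = x + λ·Σ_i w_i·(y_i − x). Then ‖x⁺ − z‖² ≤ ‖x − z‖² − λ(2 − λ)·Σ_i w_i·‖y_i − x‖². -/
open scoped RealInnerProductSpace

section Aux

variable {E : Type*} [NormedAddCommGroup E] [InnerProductSpace ℝ E]

lemma jensen_norm_sq {ι : Type*} [Fintype ι] (w : ι → ℝ) (hw : ∀ i, 0 ≤ w i)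
    (hsum : ∑ i, w i = 1) (v : ι → E) :
    ‖∑ i, w i • v i‖ ^ 2 ≤ ∑ i, w i * ‖v i‖ ^ 2 := by
  set u : E := ∑ i, w i • v i with hu
  have h1 : ∑ i, w i * ⟪v i, u⟫ = ‖u‖ ^ 2 := by
    rw [← real_inner_self_eq_norm_sq]
    rw [hu]
    rw [sum_inner]
    exact Finset.sum_congr rfl fun i _ => (real_inner_smul_left (v i) u (w i)).symm
  have h0 : 0 ≤ ∑ i, w i * ‖v i - u‖ ^ 2 :=
    Finset.sum_nonneg fun i _ => mul_nonneg (hw i) (sq_nonneg _)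
  have hexp : ∑ i, w i * ‖v i - u‖ ^ 2
      = (∑ i, w i * ‖v i‖ ^ 2) - ‖u‖ ^ 2 := by
    have : ∀ i, w i * ‖v i - u‖ ^ 2
        = w i * ‖v i‖ ^ 2 - 2 * (w i * ⟪v i, u⟫) + w i * ‖u‖ ^ 2 := by
      intro i
      rw [@norm_sub_sq_real E _ _ (v i) u]; ring
    rw [Finset.sum_congr rfl fun i _ => this i,
      Finset.sum_add_distrib, Finset.sum_sub_distrib, ← Finset.mul_sum,
      ← Finset.sum_mul, hsum, h1]
    ring
  linarith

end Aux

/-- Cegielski, Theorem 4.4.5: If each `y i` satisfies the cutter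
inequality `⟪y i - x, z - x⟫ ≥ ‖y i - x‖²`, the weights `w i > 0` sum to `1`,
and `λ ∈ (0,2]`, then the relaxed simultaneous projection step
`x⁺ = x + λ • ∑ i, w i • (y i - x)` satisfies the Fejér-type inequality
`‖x⁺ - z‖² ≤ ‖x - z‖² - λ(2-λ) ∑ i, w i ‖y i - x‖²`. -/
theorem simultaneous_projection_fejer {n : ℕ} {ι : Type*} [Fintype ι] [Nonempty ι]
    (w : ι → ℝ) (hw : ∀ i, 0 < w i) (hsum : ∑ i, w i = 1)
    (x z : EuclideanSpace ℝ (Fin n))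
    (y : ι → EuclideanSpace ℝ (Fin n))
    (hcut : ∀ i, ⟪y i - x, z - x⟫ ≥ ‖y i - x‖ ^ 2)
    (lam : ℝ) (hlam0 : 0 < lam) (hlam2 : lam ≤ 2)
    (xplus : EuclideanSpace ℝ (Fin n))
    (hxplus : xplus = x + lam • ∑ i, w i • (y i - x)) :
    ‖xplus - z‖ ^ 2 ≤ ‖x - z‖ ^ 2 - lam * (2 - lam) * ∑ i, w i * ‖y i - x‖ ^ 2 := by
  set u : EuclideanSpace ℝ (Fin n) := ∑ i, w i • (y i - x) with hu
  set S : ℝ := ∑ i, w i * ‖y i - x‖ ^ 2 with hS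
  have hjensen : ‖u‖ ^ 2 ≤ S :=
    jensen_norm_sq w (fun i => (hw i).le) hsum (fun i => y i - x)
  have hinner : ⟪u, z - x⟫ ≥ S := by
    rw [hu, sum_inner]
    apply Finset.sum_le_sum
    intro i _
    rw [real_inner_smul_left]
    exact mul_le_mul_of_nonneg_left (hcut i) (hw i).le
  have hsub : xplus - z = (x - z) + lam • u := by
    rw [hxplus]; abel
  have hnorm : ‖xplus - z‖ ^ 2
      = ‖x - z‖ ^ 2 + 2 * (lam * ⟪x - z, u⟫) + lam ^ 2 * ‖u‖ ^ 2 := by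
    rw [hsub]
    have := @norm_add_sq_real (EuclideanSpace ℝ (Fin n)) _ _ (x - z) (lam • u)
    rw [real_inner_smul_right, norm_smul] at this
    simp only [Real.norm_eq_abs] at this
    nlinarith [this, sq_abs lam]
  have hxz : ⟪x - z, u⟫ = -⟪u, z - x⟫ := by
    rw [show x - z = -(z - x) from by abel, inner_neg_left, real_inner_comm]
  rw [hnorm, hxz]
  nlinarith [mul_le_mul_of_nonneg_left hjensen (sq_nonneg lam),
    mul_le_mul_of_nonneg_left hinner hlam0.le]
end

section
/- Let I be a finite nonempty index set, let w : I → ℝ with w_i > 0 and Σ_i w_i = 1, and let x, z ∈ ℝ^n. For each i ∈ I let s_i ∈ ℝ^n satisfy the cutter inequality ⟨s_i, z − x⟩ ≥ ‖s_i‖². Let g ∈ ℝ^n, g ≠ 0, ĝ = g/‖g‖, and suppose ⟨ĝ, z − x⟩ ≥ 0 (z lies in the surrogate half-space). Define d_i = s_i − min(0, ⟨ĝ, s_i⟩)·ĝ (the projection of s_i onto the surrogate half-space), d = Σ_i w_i·d_i, and S = Σ_i w_i·‖s_i‖². Assume d ≠ 0, let λ ∈ [0, 2), and define x^{SC} = x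 + λ·(S/‖d‖²)·d. Then ‖x^{SC} − z‖² ≤ ‖x − z‖² − λ(2 − λ)·S·(S/‖d‖²). -/
open scoped RealInnerProductSpace

/-! Each `d i` satisfies the cutter inequality `⟪d i, z - x⟫ ≥ ‖s i‖²` because the correction
term `-min 0 ⟪ĝ, s i⟫ • ĝ` points into the half-space containing `z`; averaging gives
`⟪d, z - x⟫ ≥ S`. Expanding `‖x + t • d - z‖²` with `t = λ S / ‖d‖²` then yields the bound. -/

section

variable {E : Type*} [NormedAddCommGroup E] [InnerProductSpace ℝ E]

lemma inner_le_inner_sub_min_inner_smul {u v : E} (s : E) (hv : 0 ≤ ⟪u, v⟫) :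
    ⟪s, v⟫ ≤ ⟪s - min 0 ⟪u, s⟫ • u, v⟫ := by
  rw [inner_sub_left, real_inner_smul_left]
  nlinarith [min_le_left 0 ⟪u, s⟫]

lemma sum_mul_le_inner_sum_smul {ι : Type*} (t : Finset ι) {w a : ι → ℝ} {d : ι → E} {v : E}
    (hw : ∀ i ∈ t, 0 ≤ w i) (h : ∀ i ∈ t, a i ≤ ⟪d i, v⟫) :
    ∑ i ∈ t, w i * a i ≤ ⟪∑ i ∈ t, w i • d i, v⟫ := by
  rw [sum_inner]
  refine Finset.sum_le_sum fun i hi => ?_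
  rw [real_inner_smul_left]
  exact mul_le_mul_of_nonneg_left (h i hi) (hw i hi)

lemma norm_add_smul_sub_sq_le {x z d : E} {t S : ℝ} (ht : 0 ≤ t) (hS : S ≤ ⟪d, z - x⟫) :
    ‖x + t • d - z‖ ^ 2 ≤ ‖x - z‖ ^ 2 - 2 * t * S + t ^ 2 * ‖d‖ ^ 2 := by
  have hxz : ⟪x - z, d⟫ = -⟪d, z - x⟫ := by
    rw [real_inner_comm, ← inner_neg_right, neg_sub]
  rw [show x + t • d - z = (x - z) + t • d by abel, norm_add_sq_real, real_inner_smul_right,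
    hxz, norm_smul, Real.norm_eq_abs, mul_pow, sq_abs]
  nlinarith

lemma norm_surrogate_step_sub_sq_le {x z d : E} {S lam : ℝ} (hS₀ : 0 ≤ S)
    (hS : S ≤ ⟪d, z - x⟫) (hlam : 0 ≤ lam) :
    ‖x + (lam * (S / ‖d‖ ^ 2)) • d - z‖ ^ 2
      ≤ ‖x - z‖ ^ 2 - lam * (2 - lam) * S * (S / ‖d‖ ^ 2) := by
  refine (norm_add_smul_sub_sq_le (by positivity) hS).trans (le_of_eq ?_)
  by_cases hd : ‖d‖ ^ 2 = 0
  · simp [hd]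
  · field_simp
    ring

end

theorem dudek_surrogate_constraint_fejer_general {n : ℕ} {ι : Type*}
    [Fintype ι]
    (w : ι → ℝ) (hw : ∀ i, 0 < w i)
    (x z : EuclideanSpace ℝ (Fin n))
    (s : ι → EuclideanSpace ℝ (Fin n))
    (hcut : ∀ i, ⟪s i, z - x⟫ ≥ ‖s i‖ ^ 2)
    (ghat : EuclideanSpace ℝ (Fin n))
    (hz : 0 ≤ ⟪ghat, z - x⟫)
    (d : ι → EuclideanSpace ℝ (Fin n))
    (hdi : ∀ i, d i = s i - min 0 ⟪ghat, s i⟫ • ghat)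
    (dbar : EuclideanSpace ℝ (Fin n)) (hdbar : dbar = ∑ i, w i • d i)
    (S : ℝ) (hS : S = ∑ i, w i * ‖s i‖ ^ 2)
    (lam : ℝ) (hlam0 : 0 ≤ lam)
    (xSC : EuclideanSpace ℝ (Fin n))
    (hxSC : xSC = x + (lam * (S / ‖dbar‖ ^ 2)) • dbar) :
    ‖xSC - z‖ ^ 2 ≤ ‖x - z‖ ^ 2 - lam * (2 - lam) * S * (S / ‖dbar‖ ^ 2) := by
  have hS₀ : 0 ≤ S := hS ▸ Finset.sum_nonneg fun i _ => by have := hw i; positivity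
  have hSd : S ≤ ⟪dbar, z - x⟫ := by
    rw [hS, hdbar]
    refine sum_mul_le_inner_sum_smul _ (fun i _ => (hw i).le) fun i _ => ?_
    rw [hdi i]
    exact (hcut i).trans (inner_le_inner_sub_min_inner_smul (s i) hz)
  rw [hxSC]
  exact norm_surrogate_step_sub_sq_le hS₀ hSd hlam0

/-- Dudek's convergence result for cutters: if each `s i`
satisfies the cutter inequality `⟪s i, z - x⟫ ≥ ‖s i‖²`, `z` lies in the
surrogate half-space (`⟪ĝ, z - x⟫ ≥ 0` for `ĝ = g/‖g‖`), `d i` is the projection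
of `s i` onto the surrogate half-space, `d = ∑ i, w i • d i ≠ 0`,
`S = ∑ i, w i ‖s i‖²` and `λ ∈ [0,2)`, then the surrogate constraint step
`x^SC = x + λ (S/‖d‖²) • d` satisfies
`‖x^SC - z‖² ≤ ‖x - z‖² - λ(2-λ) S (S/‖d‖²)`. -/
theorem dudek_surrogate_constraint_fejer {n : ℕ} {ι : Type*}
    [Fintype ι] [Nonempty ι]
    (w : ι → ℝ) (hw : ∀ i, 0 < w i) (hsum : ∑ i, w i = 1)
    (x z : EuclideanSpace ℝ (Fin n))
    (s : ι → EuclideanSpace ℝ (Fin n))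
    (hcut : ∀ i, ⟪s i, z - x⟫ ≥ ‖s i‖ ^ 2)
    (g : EuclideanSpace ℝ (Fin n)) (hg : g ≠ 0)
    (ghat : EuclideanSpace ℝ (Fin n)) (hghat : ghat = ‖g‖⁻¹ • g)
    (hz : 0 ≤ ⟪ghat, z - x⟫)
    (d : ι → EuclideanSpace ℝ (Fin n))
    (hdi : ∀ i, d i = s i - min 0 ⟪ghat, s i⟫ • ghat)
    (dbar : EuclideanSpace ℝ (Fin n)) (hdbar : dbar = ∑ i, w i • d i)
    (hdne : dbar ≠ 0)
    (S : ℝ) (hS : S = ∑ i, w i * ‖s i‖ ^ 2)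
    (lam : ℝ) (hlam0 : 0 ≤ lam) (hlam2 : lam < 2)
    (xSC : EuclideanSpace ℝ (Fin n))
    (hxSC : xSC = x + (lam * (S / ‖dbar‖ ^ 2)) • dbar) :
    ‖xSC - z‖ ^ 2 ≤ ‖x - z‖ ^ 2 - lam * (2 - lam) * S * (S / ‖dbar‖ ^ 2) :=
  dudek_surrogate_constraint_fejer_general w hw x z s hcut ghat hz d hdi dbar hdbar S hS lam hlam0
    xSC hxSC
end

section
/- For every ρ > 0 and every D ≥ 0 there exists ε̃ ∈ (0, 1/2] such that the following holds. Let I be a finite nonempty index set, let w : I → ℝ with w_i > 0 and Σ_i w_i = 1, and let x, z ∈ ℝ^n. For each i ∈ I let s_i ∈ ℝ^n satisfy the cutter inequality ⟨s_i, z − x⟩ ≥ ‖s_i‖². Let g ∈ ℝ^n, g ≠ 0, ĝ = g/‖g‖, and suppose ⟨ĝ, s_i⟩ ≤ 0 for all i ∈ I and ⟨ĝ, z − x⟩ ≥ 0. Set p = Σ_i w_i·s_i, p̂ = p/‖p‖, and suppose ‖p‖ ≥ ρ and ⟨p̂, ĝ⟩ = −1 + ε with 0 < ε < ε̃. Define d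 = p − ⟨p, ĝ⟩·ĝ and x^{SC} = x + (‖p‖²/‖d‖²)·d, and suppose ‖x^{SC} − z‖ ≤ D. Then the optimally-stepped heavy ball iterate x^{HB} = x + √(1 − ε/2)·(‖p‖/√(2ε − ε²))·(p̂ + ĝ)/√(2ε) satisfies ‖x^{HB} − z‖² < ‖x − z‖² − Σ_i w_i·‖s_i‖². -/
/-!
Write `v = z - x`, `S = ∑ wᵢ‖sᵢ‖²` and `u = p̂ + ĝ`, so that `‖u‖² = 2ε` and the heavy ball
iterate is `x + (‖p‖ / (2ε)) • u`. Averaging the cutter inequalities gives `S ≤ ⟪p, v⟫`, Jensen's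
inequality for `‖·‖²` gives `‖p‖² ≤ S`, and `⟪ĝ, v⟫ ≥ 0`. Expanding the square then yields
`‖x^HB - z‖² ≤ ‖v‖² - S / (2ε)`, which is below `‖v‖² - S` as soon as `ε < 1/2`; hence `ε̃ = 1/2`.
-/

open scoped RealInnerProductSpace

lemma heavy_ball_step_size_eq {ε : ℝ} (hε : 0 < ε) (hε₂ : ε < 2) (a : ℝ) :
    Real.sqrt (1 - ε / 2) * (a / Real.sqrt (2 * ε - ε ^ 2)) / Real.sqrt (2 * ε) = a / (2 * ε) := by
  have hq : Real.sqrt (1 - ε / 2) ≠ 0 := (Real.sqrt_pos.mpr (by linarith)).ne'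
  have hr₀ : Real.sqrt (2 * ε) ≠ 0 := (Real.sqrt_pos.mpr (by linarith)).ne'
  have hr : Real.sqrt (2 * ε) ^ 2 = 2 * ε := Real.sq_sqrt (by linarith)
  rw [show 2 * ε - ε ^ 2 = 2 * ε * (1 - ε / 2) by ring, Real.sqrt_mul (by linarith)]
  generalize Real.sqrt (1 - ε / 2) = q at hq ⊢
  generalize Real.sqrt (2 * ε) = r at hr₀ hr ⊢
  rw [← hr]
  field_simp

section InnerProductSpace

variable {E : Type*} [NormedAddCommGroup E] [InnerProductSpace ℝ E]

lemma norm_sum_smul_sq_le_sum_mul_norm_sq {ι : Type*} (t : Finset ι) {w : ι → ℝ}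
    (hw : ∀ i ∈ t, 0 ≤ w i) (hw₁ : ∑ i ∈ t, w i = 1) (s : ι → E) :
    ‖∑ i ∈ t, w i • s i‖ ^ 2 ≤ ∑ i ∈ t, w i * ‖s i‖ ^ 2 :=
  (convexOn_univ_norm.pow (fun _ _ ↦ norm_nonneg _) 2).map_sum_le hw hw₁ fun _ _ ↦ Set.mem_univ _

lemma sum_mul_norm_sq_le_inner_sum_smul {ι : Type*} (t : Finset ι) {w : ι → ℝ}
    (hw : ∀ i ∈ t, 0 ≤ w i) {s : ι → E} {v : E} (hs : ∀ i ∈ t, ‖s i‖ ^ 2 ≤ ⟪s i, v⟫) :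
    ∑ i ∈ t, w i * ‖s i‖ ^ 2 ≤ ⟪∑ i ∈ t, w i • s i, v⟫ := by
  rw [sum_inner]
  refine Finset.sum_le_sum fun i hi ↦ ?_
  rw [real_inner_smul_left]
  exact mul_le_mul_of_nonneg_left (hs i hi) (hw i hi)

lemma norm_add_sq_of_inner_eq_neg_one_add {a b : E} (ha : ‖a‖ = 1) (hb : ‖b‖ = 1) {ε : ℝ}
    (hab : ⟪a, b⟫ = -1 + ε) : ‖a + b‖ ^ 2 = 2 * ε := by
  rw [norm_add_sq_real, ha, hb, hab]
  ring

theorem norm_heavy_ball_step_sub_sq_lt {p g v : E} {S ε : ℝ} (hp : p ≠ 0) (hg : ‖g‖ = 1)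
    (hε : 0 < ε) (hε₂ : ε < 1 / 2) (hpg : ⟪‖p‖⁻¹ • p, g⟫ = -1 + ε) (hpS : ‖p‖ ^ 2 ≤ S)
    (hSv : S ≤ ⟪p, v⟫) (hgv : 0 ≤ ⟪g, v⟫) :
    ‖(‖p‖ / (2 * ε)) • (‖p‖⁻¹ • p + g) - v‖ ^ 2 < ‖v‖ ^ 2 - S := by
  have hp₀ : 0 < ‖p‖ := norm_pos_iff.mpr hp
  have hS : 0 < S := (pow_pos hp₀ 2).trans_le hpS
  have hu : ‖‖p‖⁻¹ • p + g‖ ^ 2 = 2 * ε :=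
    norm_add_sq_of_inner_eq_neg_one_add (norm_smul_inv_norm hp) hg hpg
  have hinner : ‖p‖ * ⟪‖p‖⁻¹ • p + g, v⟫ = ⟪p, v⟫ + ‖p‖ * ⟪g, v⟫ := by
    rw [inner_add_left, real_inner_smul_left, mul_add, ← mul_assoc, mul_inv_cancel₀ hp₀.ne',
      one_mul]
  calc ‖(‖p‖ / (2 * ε)) • (‖p‖⁻¹ • p + g) - v‖ ^ 2
      = ‖v‖ ^ 2 - (⟪p, v⟫ + ‖p‖ * ⟪g, v⟫) / ε + ‖p‖ ^ 2 / (2 * ε) := by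
        rw [norm_sub_sq_real, norm_smul, mul_pow, hu, real_inner_smul_left, Real.norm_eq_abs,
          sq_abs, ← hinner]
        field_simp
        ring
    _ ≤ ‖v‖ ^ 2 - S / ε + S / (2 * ε) := by
        gcongr
        exact le_add_of_le_of_nonneg hSv (mul_nonneg hp₀.le hgv)
    _ = ‖v‖ ^ 2 - S / (2 * ε) := by ring
    _ < ‖v‖ ^ 2 - S := by
        gcongr
        rw [lt_div_iff₀ (by positivity)]
        exact mul_lt_of_lt_one_right hS (by linarith)

end InnerProductSpace

/-- acceleration by the heavy ball perturbation: for every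
`ρ > 0` and `D ≥ 0` there is a threshold `ε̃ ∈ (0, 1/2]` such that whenever the
zigzag angle condition `⟪p̂, ĝ⟫ = -1 + ε` holds with `0 < ε < ε̃`, `‖p‖ ≥ ρ`, the
cutter and half-space hypotheses hold, and the surrogate constraint target
satisfies `‖x^SC - z‖ ≤ D`, the optimally-stepped heavy ball iterate
`x^HB = x + √(1 - ε/2)·(‖p‖/√(2ε - ε²))·(p̂ + ĝ)/√(2ε)` satisfies
`‖x^HB - z‖² < ‖x - z‖² - ∑ i, w i ‖s i‖²`. -/
theorem heavy_ball_acceleration :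
    ∀ ρ D : ℝ, 0 < ρ → 0 ≤ D →
      ∃ εtilde : ℝ, 0 < εtilde ∧ εtilde ≤ 1 / 2 ∧
        ∀ (n : ℕ) (ι : Type) [Fintype ι] [Nonempty ι] (w : ι → ℝ),
          (∀ i, 0 < w i) → (∑ i, w i) = 1 →
          ∀ (x z : EuclideanSpace ℝ (Fin n)) (s : ι → EuclideanSpace ℝ (Fin n)),
            (∀ i, ⟪s i, z - x⟫ ≥ ‖s i‖ ^ 2) →
            ∀ g : EuclideanSpace ℝ (Fin n), g ≠ 0 →
              ∀ ghat : EuclideanSpace ℝ (Fin n), ghat = ‖g‖⁻¹ • g →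
                (∀ i, ⟪ghat, s i⟫ ≤ 0) → 0 ≤ ⟪ghat, z - x⟫ →
                ∀ p : EuclideanSpace ℝ (Fin n), p = ∑ i, w i • s i → ρ ≤ ‖p‖ →
                  ∀ phat : EuclideanSpace ℝ (Fin n), phat = ‖p‖⁻¹ • p →
                    ∀ ε : ℝ, 0 < ε → ε < εtilde → ⟪phat, ghat⟫ = -1 + ε →
                      ∀ d : EuclideanSpace ℝ (Fin n), d = p - ⟪p, ghat⟫ • ghat →
                        ∀ xSC : EuclideanSpace ℝ (Fin n),
                          xSC = x + (‖p‖ ^ 2 / ‖d‖ ^ 2) • d → ‖xSC - z‖ ≤ D →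
                          ∀ xHB : EuclideanSpace ℝ (Fin n),
                            xHB = x + (Real.sqrt (1 - ε / 2) *
                              (‖p‖ / Real.sqrt (2 * ε - ε ^ 2)) /
                                Real.sqrt (2 * ε)) • (phat + ghat) →
                            ‖xHB - z‖ ^ 2 <
                              ‖x - z‖ ^ 2 - ∑ i, w i * ‖s i‖ ^ 2 := by
  intro ρ D hρ _
  refine ⟨1 / 2, by norm_num, le_rfl, ?_⟩
  intro n ι _ _ w hw hw₁ x z s hcut g hg ghat rfl _ hgv p rfl hρp phat rfl ε hε hε₂ hpg
    d _ xSC _ _ xHB rfl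
  have hp : ∑ i, w i • s i ≠ 0 := norm_pos_iff.mp (hρ.trans_le hρp)
  rw [heavy_ball_step_size_eq hε (by linarith), norm_sub_rev x, add_comm x,
    ← sub_sub_eq_add_sub]
  exact norm_heavy_ball_step_sub_sq_lt hp (norm_smul_inv_norm hg) hε hε₂ hpg
    (norm_sum_smul_sq_le_sum_mul_norm_sq _ (fun i _ ↦ (hw i).le) hw₁ s)
    (sum_mul_norm_sq_le_inner_sum_smul _ (fun i _ ↦ (hw i).le) fun i _ ↦ hcut i) hgv
end

section
/- Let u and v be unit vectors in ℝ^n with ⟨u, v⟩ = −1 + ε for some ε ∈ (0, 1). Let d = u − ⟨u, v⟩·v. Then u + v ≠ 0, d ≠ 0, and ⟨(u + v)/‖u + v‖, d/‖d‖⟩ = √(1 − ε/2). -/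
open scoped RealInnerProductSpace

/-!
With `c = ⟪u, v⟫`, the vector `d = u - c • v` is orthogonal to `v`, so `⟪u + v, d⟫ = ‖d‖²`
and the cosine in question is `‖d‖ / ‖u + v‖`. For unit vectors `‖d‖² = 1 - c²` and
`‖u + v‖² = 2 (1 + c)`, whose quotient is `(1 - c) / 2 = 1 - ε / 2`.
-/

section

variable {E : Type*} [NormedAddCommGroup E] [InnerProductSpace ℝ E]

theorem inner_sub_inner_smul_of_norm_eq_one {v : E} (hv : ‖v‖ = 1) (u : E) :
    ⟪v, u - ⟪u, v⟫ • v⟫ = 0 := by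
  rw [inner_sub_right, real_inner_smul_right, real_inner_self_eq_norm_sq, hv, real_inner_comm]
  ring

theorem inner_add_sub_inner_smul_of_norm_eq_one {v : E} (hv : ‖v‖ = 1) (u : E) :
    ⟪u + v, u - ⟪u, v⟫ • v⟫ = ‖u - ⟪u, v⟫ • v‖ ^ 2 := by
  have horth := inner_sub_inner_smul_of_norm_eq_one hv u
  calc ⟪u + v, u - ⟪u, v⟫ • v⟫ = ⟪u, u - ⟪u, v⟫ • v⟫ := by rw [inner_add_left, horth, add_zero]
    _ = ⟪u - ⟪u, v⟫ • v, u - ⟪u, v⟫ • v⟫ := by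
      rw [inner_sub_left, real_inner_smul_left, horth, mul_zero, sub_zero]
    _ = ‖u - ⟪u, v⟫ • v‖ ^ 2 := real_inner_self_eq_norm_sq _

theorem norm_sub_inner_smul_sq_of_norm_eq_one {v : E} (hv : ‖v‖ = 1) (u : E) :
    ‖u - ⟪u, v⟫ • v‖ ^ 2 = ‖u‖ ^ 2 - ⟪u, v⟫ ^ 2 := by
  rw [norm_sub_sq_real, norm_smul, real_inner_smul_right, hv, Real.norm_eq_abs, mul_one, sq_abs]
  ring

theorem norm_add_sq_of_norm_eq_one {u v : E} (hu : ‖u‖ = 1) (hv : ‖v‖ = 1) :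
    ‖u + v‖ ^ 2 = 2 * (1 + ⟪u, v⟫) := by
  rw [norm_add_sq_real, hu, hv]
  ring

theorem inner_normalize_eq_norm_div_norm {w d : E} (h : ⟪w, d⟫ = ‖d‖ ^ 2) :
    ⟪‖w‖⁻¹ • w, ‖d‖⁻¹ • d⟫ = ‖d‖ / ‖w‖ := by
  rw [real_inner_smul_left, real_inner_smul_right, h]
  rcases eq_or_ne ‖d‖ 0 with hd | hd
  · simp [hd]
  · field_simp

end

/-- For unit vectors `u`, `v` with `⟪u, v⟫ = -1 + ε`, `ε ∈ (0,1)`,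
and `d = u - ⟪u, v⟫ • v` (the component of `u` orthogonal to `v`), one has
`u + v ≠ 0`, `d ≠ 0`, and the angle identity
`⟪(u + v)/‖u + v‖, d/‖d‖⟫ = √(1 - ε/2)` (i.e. the heavy ball direction makes
angle `α/2` with the surrogate constraint direction). -/
theorem heavy_ball_surrogate_angle {n : ℕ}
    (u v : EuclideanSpace ℝ (Fin n))
    (hu : ‖u‖ = 1) (hv : ‖v‖ = 1)
    (ε : ℝ) (hε0 : 0 < ε) (hε1 : ε < 1)
    (hangle : ⟪u, v⟫ = -1 + ε)
    (d : EuclideanSpace ℝ (Fin n)) (hd : d = u - ⟪u, v⟫ • v) :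
    u + v ≠ 0 ∧ d ≠ 0 ∧
      ⟪‖u + v‖⁻¹ • (u + v), ‖d‖⁻¹ • d⟫ = Real.sqrt (1 - ε / 2) := by
  have hsum : ‖u + v‖ ^ 2 = 2 * ε := by
    rw [norm_add_sq_of_norm_eq_one hu hv, hangle]
    ring
  have hrej : ‖d‖ ^ 2 = ε * (2 - ε) := by
    rw [hd, norm_sub_inner_smul_sq_of_norm_eq_one hv, hu, hangle]
    ring
  have hinner : ⟪u + v, d⟫ = ‖d‖ ^ 2 := hd ▸ inner_add_sub_inner_smul_of_norm_eq_one hv u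
  refine ⟨?_, ?_, ?_⟩
  · rw [← norm_ne_zero_iff, ← pow_ne_zero_iff two_ne_zero, hsum]
    positivity
  · rw [← norm_ne_zero_iff, ← pow_ne_zero_iff two_ne_zero, hrej]
    exact mul_ne_zero hε0.ne' (by linarith)
  · rw [inner_normalize_eq_norm_div_norm hinner,
      ← Real.sqrt_sq (div_nonneg (norm_nonneg d) (norm_nonneg (u + v))), div_pow, hsum, hrej]
    congr 1
    field_simp
end
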